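/- For N = 2n and parameters a = (a_1,…,a_n) with all a_k nonzero, the matrix J(a) = Σ_{k=1}^n a_k (e_{2k-1,2k} - q e_{2k,2k-1}) satisfies the reflection equation R⁺₁₂ J₂ (R⁺₁₂)^{t₂} J₁ = J₁ (R⁺₁₂)^{t₂} J₂ R⁺₁₂ in End(V⊗V), where V = K^{2n}. -/
import Mathlib

set_option maxHeartbeats 1000000

open Matrix Kronecker

noncomputable section

/-- The ground field `K = ℚ(q)`. -/
abbrev K1 : Type := RatFunc ℚ

/-- The indeterminate `q`. -/
noncomputable def q1 : K1 := RatFunc.X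

/-- The quantum R-matrix on `V ⊗ V`, `V = K^N`. -/
noncomputable def Rplus (N : ℕ) : Matrix (Fin N × Fin N) (Fin N × Fin N) K1 := fun p r =>
  (if p = r then (if p.1 = p.2 then q1 else 1) else 0) +
    (if p.1 < p.2 ∧ r.1 = p.2 ∧ r.2 = p.1 then q1 - q1⁻¹ else 0)

/-- Transposition in the second tensor factor. -/
noncomputable def t2 {N : ℕ} (M : Matrix (Fin N × Fin N) (Fin N × Fin N) K1) :
    Matrix (Fin N × Fin N) (Fin N × Fin N) K1 := fun p r => M (p.1, r.2) (r.1, p.2)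

/-- The Case (Sp) matrix `J(a) = Σ_{k=1}^n a_k (e_{2k-1,2k} - q e_{2k,2k-1})`
(0-based indices: rows/columns `2k, 2k+1` for `k = 0,…,n-1`). -/
noncomputable def JSp (n : ℕ) (a : Fin n → K1) : Matrix (Fin (2 * n)) (Fin (2 * n)) K1 :=
  fun i j => ∑ k : Fin n,
    a k * ((if (i : ℕ) = 2 * k ∧ (j : ℕ) = 2 * k + 1 then 1 else 0) -
      q1 * (if (i : ℕ) = 2 * k + 1 ∧ (j : ℕ) = 2 * k then 1 else 0))

namespace Stmt2Aux

noncomputable def wq : K1 := q1 - q1⁻¹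
noncomputable def qn (x y : ℕ) : K1 := if x = y then q1 else 1

noncomputable def JA (A : ℕ → K1) (x y : ℕ) : K1 :=
  (if y = x + 1 ∧ x % 2 = 0 then A (x / 2) else 0) +
    (if x = y + 1 ∧ y % 2 = 0 then -q1 * A (y / 2) else 0)

def adj (x y : ℕ) : Prop := (y = x + 1 ∧ x % 2 = 0) ∨ (x = y + 1 ∧ y % 2 = 0)

instance : ∀ x y, Decidable (adj x y) := fun x y => by unfold adj; infer_instance

lemma JA_zero (A : ℕ → K1) {x y : ℕ} (h : ¬ adj x y) : JA A x y = 0 := by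
  unfold adj at h
  rw [JA, if_neg (by tauto), if_neg (by tauto), add_zero]

lemma JA_pos (A : ℕ → K1) {x y : ℕ} (h : y = x + 1 ∧ x % 2 = 0) :
    JA A x y = A (x / 2) ∧ JA A y x = -q1 * A (x / 2) := by
  constructor
  · rw [JA, if_pos h, if_neg (by omega), add_zero]
  · rw [JA, if_neg (by omega), if_pos (by omega), zero_add]

lemma qn_congr {x y u v : ℕ} (h : (x = y) ↔ (u = v)) : qn x y = qn u v := by
  rw [qn, qn]
  split_ifs with h1 h2 h2 <;> simp_all

lemma qn_ne {x y : ℕ} (h : x ≠ y) : qn x y = 1 := if_neg h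

lemma hq1 : q1 ≠ 0 := RatFunc.X_ne_zero
lemma wq_def : wq = q1 - q1⁻¹ := rfl

lemma key1_nat (A : ℕ → K1) (I J M P : ℕ) :
    qn I J * qn I P * (JA A I M * JA A J P) =
      qn M P * qn M J * (JA A I M * JA A J P) := by
  by_cases h1 : adj I M
  · by_cases h2 : adj J P
    · have e1 : (I = P) ↔ (M = J) := by unfold adj at h1 h2; omega
      have e2 : (I = J) ↔ (M = P) := by unfold adj at h1 h2; omega
      rw [qn_congr e1, qn_congr e2]
    · rw [JA_zero A h2]
      ring
  · rw [JA_zero A h1]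
    ring

lemma key2_nat (A : ℕ → K1) (I J M P : ℕ) :
    (if I < J then wq * qn J P * (JA A I P * JA A J M) else 0) +
      (if I < P then wq * qn I J * (JA A J I * JA A P M) else 0) +
      (if I < J ∧ J < P then wq * wq * (JA A I J * JA A P M) else 0) =
    (if J < M then wq * qn M P * (JA A I J * JA A M P) else 0) +
      (if P < M then wq * qn P J * (JA A I P * JA A J M) else 0) +
      (if J < P ∧ P < M then wq * wq * (JA A I J * JA A P M) else 0) := by
  by_cases c3 : adj I J ∧ adj M P
  · obtain ⟨h3a, h3b⟩ := c3
    by_cases c2 : adj I P ∧ adj J M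
    · -- forces M = I, P = J
      obtain ⟨hM, hP⟩ : M = I ∧ P = J := by unfold adj at *; omega
      rw [hM, hP]
      have hne : qn I J = 1 := qn_ne (by unfold adj at h3a; omega)
      have hq0 := hq1
      rcases h3a with h | h <;> obtain ⟨e1, e2⟩ := JA_pos A h <;>
        rw [show qn J J = q1 from if_pos rfl, hne, e1, e2] <;>
        split_ifs <;> first
          | (exfalso; omega)
          | ring1
          | (rw [wq_def]; field_simp; ring)
          | (rw [wq_def]; field_simp)
    · -- pure c3 : the (I P)/(J M) products vanish
      have z1 : JA A I P * JA A J M = 0 := by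
        rcases not_and_or.mp c2 with h | h
        · rw [JA_zero A h]; ring
        · rw [JA_zero A h]; ring
      rw [z1]
      have e1 : qn I J = 1 := qn_ne (by unfold adj at h3a; omega)
      have e2 : qn M P = 1 := qn_ne (by unfold adj at h3b; omega)
      rw [e1, e2]
      unfold adj at c2
      have hq0 := hq1
      rcases h3a with h | h <;> rcases h3b with h' | h' <;>
        [skip; skip; skip; skip] <;>
        obtain ⟨f1, f2⟩ := JA_pos A h <;> obtain ⟨g1, g2⟩ := JA_pos A h'
      · rw [f1, f2, g1, g2]
        split_ifs <;> first
          | (exfalso; omega)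
          | ring1
          | (rw [wq_def]; field_simp; ring)
          | (rw [wq_def]; field_simp)
      · rw [f1, f2, g1, g2]
        split_ifs <;> first
          | (exfalso; omega)
          | ring1
          | (rw [wq_def]; field_simp; ring)
          | (rw [wq_def]; field_simp)
      · rw [f1, f2, g1, g2]
        split_ifs <;> first
          | (exfalso; omega)
          | ring1
          | (rw [wq_def]; field_simp; ring)
          | (rw [wq_def]; field_simp)
      · rw [f1, f2, g1, g2]
        split_ifs <;> first
          | (exfalso; omega)
          | ring1
          | (rw [wq_def]; field_simp; ring)
          | (rw [wq_def]; field_simp)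
  · -- c3 fails : all (I J)/(M P)-type products vanish
    have nz : (¬ adj I J) ∨ (¬ adj M P) := not_and_or.mp c3
    have z1 : JA A I J = 0 ∨ JA A P M = 0 := by
      rcases nz with h | h
      · exact Or.inl (JA_zero A h)
      · exact Or.inr (JA_zero A (by unfold adj at *; omega))
    have z2 : JA A J I = 0 ∨ JA A P M = 0 := by
      rcases nz with h | h
      · exact Or.inl (JA_zero A (by unfold adj at *; omega))
      · exact Or.inr (JA_zero A (by unfold adj at *; omega))
    have z3 : JA A I J = 0 ∨ JA A M P = 0 := by
      rcases nz with h | h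
      · exact Or.inl (JA_zero A h)
      · exact Or.inr (JA_zero A h)
    have t2z : (if I < P then wq * qn I J * (JA A J I * JA A P M) else 0) = 0 := by
      rcases z2 with h | h <;> rw [h] <;> split_ifs <;> ring
    have t3z : (if I < J ∧ J < P then wq * wq * (JA A I J * JA A P M) else 0) = 0 := by
      rcases z1 with h | h <;> rw [h] <;> split_ifs <;> ring
    have t4z : (if J < M then wq * qn M P * (JA A I J * JA A M P) else 0) = 0 := by
      rcases z3 with h | h <;> rw [h] <;> split_ifs <;> ring
    have t6z : (if J < P ∧ P < M then wq * wq * (JA A I J * JA A P M) else 0) = 0 := by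
      rcases z1 with h | h <;> rw [h] <;> split_ifs <;> ring
    rw [t2z, t3z, t4z, t6z, add_zero, add_zero, zero_add, add_zero]
    by_cases c2 : adj I P ∧ adj J M
    · have hiff : (I < J) ↔ (P < M) := by unfold adj at *; omega
      have hqn : qn J P = qn P J := qn_congr (by omega)
      rw [hqn]
      by_cases h : I < J
      · rw [if_pos h, if_pos (hiff.mp h)]
      · rw [if_neg h, if_neg (fun hh => h (hiff.mpr hh))]
    · have z : JA A I P * JA A J M = 0 := by
        rcases not_and_or.mp c2 with h | h
        · rw [JA_zero A h]; ring
        · rw [JA_zero A h]; ring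
      rw [z]
      split_ifs <;> ring

lemma key_nat (A : ℕ → K1) (I J M P : ℕ) :
    qn I J * qn I P * (JA A I M * JA A J P) +
      (if I < J then wq * qn J P * (JA A I P * JA A J M) else 0) +
      (if I < P then wq * qn I J * (JA A J I * JA A P M) else 0) +
      (if I < J ∧ J < P then wq * wq * (JA A I J * JA A P M) else 0) =
    qn M P * qn M J * (JA A I M * JA A J P) +
      (if J < M then wq * qn M P * (JA A I J * JA A M P) else 0) +
      (if P < M then wq * qn P J * (JA A I P * JA A J M) else 0) +
      (if J < P ∧ P < M then wq * wq * (JA A I J * JA A P M) else 0) := by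
  linear_combination key1_nat A I J M P + key2_nat A I J M P


variable {N : ℕ}

noncomputable def Dm (N : ℕ) : Matrix (Fin N × Fin N) (Fin N × Fin N) K1 :=
  Matrix.diagonal (fun p => qn p.1 p.2)
noncomputable def Sm (N : ℕ) : Matrix (Fin N × Fin N) (Fin N × Fin N) K1 :=
  fun p r => if p.1 < p.2 ∧ r.1 = p.2 ∧ r.2 = p.1 then wq else 0
noncomputable def Tm (N : ℕ) : Matrix (Fin N × Fin N) (Fin N × Fin N) K1 :=
  fun p r => if p.2 = p.1 ∧ r.1 = r.2 ∧ p.1 < r.1 then wq else 0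

lemma Rplus_eq : Rplus N = Dm N + Sm N := by
  funext p r
  simp only [Rplus, Dm, Sm, Matrix.add_apply, Matrix.diagonal, Matrix.of_apply, qn, wq]
  congr 1
  · split_ifs with h1 h2 h2 <;> simp_all [Fin.ext_iff, Prod.ext_iff] <;> omega
lemma t2Rplus_eq : t2 (Rplus N) = Dm N + Tm N := by
  funext p r
  simp only [t2, Rplus, Dm, Tm, Matrix.add_apply, Matrix.diagonal, Matrix.of_apply, qn, wq,
    Prod.ext_iff]
  congr 1
  · split_ifs with h1 h2 h2 <;> simp_all [Fin.ext_iff, Prod.ext_iff] <;> omega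
  · split_ifs with h1 h2 h2 <;> simp_all [Fin.ext_iff, Prod.ext_iff] <;> omega

lemma sum_pt {α : Type*} [Fintype α] [DecidableEq α] (c : α) (f : α → K1)
    (h : ∀ x, x ≠ c → f x = 0) : ∑ x, f x = f c :=
  Finset.sum_eq_single c (fun b _ hb => h b hb) (by simp)


lemma Sm_mul (M : Matrix (Fin N × Fin N) (Fin N × Fin N) K1) (p r : Fin N × Fin N) :
    (Sm N * M) p r = if p.1 < p.2 then wq * M (p.2, p.1) r else 0 := by
  rw [Matrix.mul_apply]
  by_cases h : p.1 < p.2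
  · rw [if_pos h]
    rw [sum_pt (p.2, p.1) _ (fun x hx => ?_)]
    · simp [Sm, h]
    · simp only [Sm]
      rw [if_neg, zero_mul]
      rintro ⟨-, h1, h2⟩
      exact hx (by rw [Prod.ext_iff]; exact ⟨h1, h2⟩)
  · rw [if_neg h]
    apply Finset.sum_eq_zero
    intro x _
    simp [Sm, h]

lemma mul_Sm (M : Matrix (Fin N × Fin N) (Fin N × Fin N) K1) (p r : Fin N × Fin N) :
    (M * Sm N) p r = if r.2 < r.1 then wq * M p (r.2, r.1) else 0 := by
  rw [Matrix.mul_apply]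
  by_cases h : r.2 < r.1
  · rw [if_pos h]
    rw [sum_pt (r.2, r.1) _ (fun x hx => ?_)]
    · simp [Sm, h, mul_comm]
    · simp only [Sm]
      rw [if_neg, mul_zero]
      rintro ⟨h0, h1, h2⟩
      exact hx (by rw [Prod.ext_iff]; exact ⟨h2.symm, h1.symm⟩)
  · rw [if_neg h]
    apply Finset.sum_eq_zero
    intro x _
    simp only [Sm]
    rw [if_neg, mul_zero]
    rintro ⟨h0, h1, h2⟩
    omega

lemma mul_Tm (M : Matrix (Fin N × Fin N) (Fin N × Fin N) K1) (p r : Fin N × Fin N) :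
    (M * Tm N) p r =
      if r.1 = r.2 then ∑ γ : Fin N, (if γ < r.1 then wq * M p (γ, γ) else 0) else 0 := by
  rw [Matrix.mul_apply]
  by_cases h : r.1 = r.2
  · rw [if_pos h, Fintype.sum_prod_type]
    apply Finset.sum_congr rfl
    intro γ _
    rw [sum_pt γ _ (fun δ hδ => ?_)]
    · by_cases h2 : γ < r.1 <;> simp [Tm, h, h2, mul_comm]
    · simp only [Tm]
      rw [if_neg (by rintro ⟨h1, -, -⟩; exact hδ h1), mul_zero]
  · rw [if_neg h]
    apply Finset.sum_eq_zero
    intro x _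
    simp only [Tm]
    rw [if_neg (by rintro ⟨-, h1, -⟩; exact h h1), mul_zero]

lemma Tm_mul (M : Matrix (Fin N × Fin N) (Fin N × Fin N) K1) (p r : Fin N × Fin N) :
    (Tm N * M) p r =
      if p.2 = p.1 then ∑ ν : Fin N, (if p.1 < ν then wq * M (ν, ν) r else 0) else 0 := by
  rw [Matrix.mul_apply]
  by_cases h : p.2 = p.1
  · rw [if_pos h, Fintype.sum_prod_type]
    apply Finset.sum_congr rfl
    intro ν _
    rw [sum_pt ν _ (fun δ hδ => ?_)]
    · by_cases h2 : p.1 < ν <;> simp [Tm, h, h2]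
    · simp only [Tm]
      rw [if_neg (by rintro ⟨-, h1, -⟩; exact hδ h1.symm), zero_mul]
  · rw [if_neg h]
    apply Finset.sum_eq_zero
    intro x _
    simp only [Tm]
    rw [if_neg (by rintro ⟨h1, -, -⟩; exact h h1), zero_mul]

lemma oneK (J : Matrix (Fin N) (Fin N) K1) (p r : Fin N × Fin N) :
    ((1 : Matrix (Fin N) (Fin N) K1) ⊗ₖ J) p r = if p.1 = r.1 then J p.2 r.2 else 0 := by
  simp [Matrix.kroneckerMap_apply, Matrix.one_apply, ite_mul]

lemma Kone (J : Matrix (Fin N) (Fin N) K1) (p r : Fin N × Fin N) :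
    (J ⊗ₖ (1 : Matrix (Fin N) (Fin N) K1)) p r = if p.2 = r.2 then J p.1 r.1 else 0 := by
  simp [Matrix.kroneckerMap_apply, Matrix.one_apply, mul_ite]


variable (J : Matrix (Fin N) (Fin N) K1)

lemma Dm_mul (M : Matrix (Fin N × Fin N) (Fin N × Fin N) K1) (p r : Fin N × Fin N) :
    (Dm N * M) p r = qn p.1 p.2 * M p r := by
  rw [Dm, Matrix.diagonal_mul]

lemma mul_Dm (M : Matrix (Fin N × Fin N) (Fin N × Fin N) K1) (p r : Fin N × Fin N) :
    (M * Dm N) p r = M p r * qn r.1 r.2 := by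
  rw [Dm, Matrix.mul_diagonal]

lemma A_apply (i j γ δ : Fin N) :
    ((Dm N + Sm N) * ((1 : Matrix (Fin N) (Fin N) K1) ⊗ₖ J)) (i, j) (γ, δ) =
      (if i = γ then qn i j * J j δ else 0) +
        (if i < j ∧ j = γ then wq * J i δ else 0) := by
  rw [Matrix.add_mul, Matrix.add_apply, Dm_mul, Sm_mul, oneK]
  congr 1
  · split_ifs <;> simp_all <;>
      (exfalso; simp only [Fin.lt_def, Fin.le_def, Fin.ext_iff] at *; omega)
  · by_cases h : (i : Fin N) < j
    · rw [if_pos h, oneK]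
      split_ifs <;> simp_all <;>
        (exfalso; simp only [Fin.lt_def, Fin.le_def, Fin.ext_iff] at *; omega)
    · rw [if_neg h, if_neg (by tauto)]

lemma sumA (i j μ : Fin N) :
    (∑ γ : Fin N,
        if γ < μ then
          wq * (((Dm N + Sm N) * ((1 : Matrix (Fin N) (Fin N) K1) ⊗ₖ J)) (i, j) (γ, γ)) else 0) =
      (if i < μ then wq * (qn i j * J j i) else 0) +
        (if i < j ∧ j < μ then wq * (wq * J i j) else 0) := by
  have step : ∀ γ : Fin N,
      (if γ < μ then
          wq * (((Dm N + Sm N) * ((1 : Matrix (Fin N) (Fin N) K1) ⊗ₖ J)) (i, j) (γ, γ)) else 0) =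
        (if γ = i then (if i < μ then wq * (qn i j * J j i) else 0) else 0) +
          (if γ = j then (if i < j ∧ j < μ then wq * (wq * J i j) else 0) else 0) := by
    intro γ
    rw [A_apply]
    by_cases h1 : γ = i <;> by_cases h2 : γ = j <;>
      subst_eqs <;> split_ifs <;> simp_all <;> ring
  rw [Finset.sum_congr rfl (fun γ _ => step γ), Finset.sum_add_distrib]
  congr 1
  · rw [sum_pt i _ (fun x hx => if_neg hx)]
    simp
  · rw [sum_pt j _ (fun x hx => if_neg hx)]
    simp

lemma B_apply (i j μ ν : Fin N) :
    ((Dm N + Sm N) * ((1 : Matrix (Fin N) (Fin N) K1) ⊗ₖ J) * (Dm N + Tm N)) (i, j) (μ, ν) =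
      ((if i = μ then qn i j * J j ν else 0) + (if i < j ∧ j = μ then wq * J i ν else 0)) *
          qn μ ν +
        (if μ = ν then
          (if i < μ then wq * (qn i j * J j i) else 0) +
            (if i < j ∧ j < μ then wq * (wq * J i j) else 0) else 0) := by
  rw [Matrix.mul_add, Matrix.add_apply, mul_Dm, mul_Tm, A_apply]
  congr 1
  by_cases h : (μ : Fin N) = ν
  · rw [if_pos h, if_pos h]
    exact sumA J i j μ
  · rw [if_neg h, if_neg h]

lemma lhs_entry (i j m p : Fin N) :
    ((Dm N + Sm N) * ((1 : Matrix (Fin N) (Fin N) K1) ⊗ₖ J) * (Dm N + Tm N) *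
        (J ⊗ₖ (1 : Matrix (Fin N) (Fin N) K1))) (i, j) (m, p) =
      qn i j * qn i p * (J i m * J j p) +
        (if i < j then wq * qn j p * (J i p * J j m) else 0) +
        (if i < p then wq * qn i j * (J j i * J p m) else 0) +
        (if i < j ∧ j < p then wq * wq * (J i j * J p m) else 0) := by
  rw [Matrix.mul_apply, Fintype.sum_prod_type]
  have inner : ∀ μ : Fin N,
      (∑ ν : Fin N,
        ((Dm N + Sm N) * ((1 : Matrix (Fin N) (Fin N) K1) ⊗ₖ J) * (Dm N + Tm N)) (i, j) (μ, ν) *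
          (J ⊗ₖ (1 : Matrix (Fin N) (Fin N) K1)) (μ, ν) (m, p)) =
        ((Dm N + Sm N) * ((1 : Matrix (Fin N) (Fin N) K1) ⊗ₖ J) * (Dm N + Tm N)) (i, j) (μ, p) *
          J μ m := by
    intro μ
    rw [sum_pt p _ (fun ν hν => ?_)]
    · rw [Kone]
      simp
    · rw [Kone, if_neg (by simpa using hν), mul_zero]
  rw [Finset.sum_congr rfl (fun μ _ => inner μ)]
  have step : ∀ μ : Fin N,
      ((Dm N + Sm N) * ((1 : Matrix (Fin N) (Fin N) K1) ⊗ₖ J) * (Dm N + Tm N)) (i, j) (μ, p) *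
          J μ m =
        (if μ = i then qn i j * qn i p * (J i m * J j p) else 0) +
          ((if μ = j then (if i < j then wq * qn j p * (J i p * J j m) else 0) else 0) +
            (if μ = p then
              ((if i < p then wq * qn i j * (J j i * J p m) else 0) +
                (if i < j ∧ j < p then wq * wq * (J i j * J p m) else 0)) else 0)) := by
    intro μ
    rw [B_apply]
    by_cases h1 : μ = i <;> by_cases h2 : μ = j <;> by_cases h3 : μ = p <;>
      subst_eqs <;> split_ifs <;> simp_all <;> ring
  rw [Finset.sum_congr rfl (fun μ _ => step μ), Finset.sum_add_distrib,
    Finset.sum_add_distrib]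
  rw [sum_pt i _ (fun x hx => if_neg hx), sum_pt j _ (fun x hx => if_neg hx),
    sum_pt p _ (fun x hx => if_neg hx)]
  simp only [if_pos rfl, if_true]
  ring

lemma C_apply (i j γ δ : Fin N) :
    ((J ⊗ₖ (1 : Matrix (Fin N) (Fin N) K1)) * (Dm N + Tm N)) (i, j) (γ, δ) =
      (if j = δ then J i γ * qn γ δ else 0) +
        (if γ = δ ∧ j < γ then wq * J i j else 0) := by
  rw [Matrix.mul_add, Matrix.add_apply, mul_Dm, mul_Tm, Kone]
  congr 1
  · split_ifs <;> simp_all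
  · by_cases h : (γ : Fin N) = δ
    · rw [if_pos h]
      rw [sum_pt j _ (fun ν hν => ?_)]
      · rw [Kone]
        by_cases h2 : (j : Fin N) < γ <;> simp [h2, h]
      · simp [Kone, Ne.symm hν]
    · rw [if_neg h, if_neg (by tauto)]

lemma E_apply (i j μ ε : Fin N) :
    ((J ⊗ₖ (1 : Matrix (Fin N) (Fin N) K1)) * (Dm N + Tm N) *
        ((1 : Matrix (Fin N) (Fin N) K1) ⊗ₖ J)) (i, j) (μ, ε) =
      qn μ j * (J i μ * J j ε) + (if j < μ then wq * (J i j * J μ ε) else 0) := by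
  rw [Matrix.mul_apply, Fintype.sum_prod_type]
  rw [sum_pt μ _ (fun γ hγ => ?_)]
  · have inner : ∀ δ : Fin N,
        ((J ⊗ₖ (1 : Matrix (Fin N) (Fin N) K1)) * (Dm N + Tm N)) (i, j) (μ, δ) *
          ((1 : Matrix (Fin N) (Fin N) K1) ⊗ₖ J) (μ, δ) (μ, ε) =
        (if δ = j then qn μ j * (J i μ * J j ε) else 0) +
          (if δ = μ then (if j < μ then wq * (J i j * J μ ε) else 0) else 0) := by
      intro δ
      rw [C_apply, oneK]
      by_cases h1 : δ = j <;> by_cases h2 : δ = μ <;>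
        subst_eqs <;> split_ifs <;> simp_all <;> ring
    rw [Finset.sum_congr rfl (fun δ _ => inner δ), Finset.sum_add_distrib,
      sum_pt j _ (fun x hx => if_neg hx), sum_pt μ _ (fun x hx => if_neg hx)]
    simp
  · apply Finset.sum_eq_zero
    intro δ _
    rw [oneK, if_neg (by simpa using hγ), mul_zero]

lemma rhs_entry (i j m p : Fin N) :
    ((J ⊗ₖ (1 : Matrix (Fin N) (Fin N) K1)) * (Dm N + Tm N) *
        ((1 : Matrix (Fin N) (Fin N) K1) ⊗ₖ J) * (Dm N + Sm N)) (i, j) (m, p) =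
      qn m p * qn m j * (J i m * J j p) +
        (if j < m then wq * qn m p * (J i j * J m p) else 0) +
        (if p < m then wq * qn p j * (J i p * J j m) else 0) +
        (if j < p ∧ p < m then wq * wq * (J i j * J p m) else 0) := by
  rw [Matrix.mul_add, Matrix.add_apply, mul_Dm, mul_Sm, E_apply]
  by_cases h : (p : Fin N) < m
  · rw [if_pos h, E_apply]
    by_cases h2 : (j : Fin N) < p <;> by_cases h3 : (j : Fin N) < m <;>
      split_ifs <;> simp_all <;> ring
  · rw [if_neg h]
    have h4 : ¬((j : Fin N) < p ∧ p < m) := by tauto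
    rw [if_neg h4]
    split_ifs <;> simp_all <;> ring



noncomputable def Af (n : ℕ) (a : Fin n → K1) : ℕ → K1 :=
  fun t => if h : t < n then a ⟨t, h⟩ else 0

lemma J_apply (n : ℕ) (a : Fin n → K1) (i j : Fin (2 * n)) :
    JSp n a i j = JA (Af n a) (i : ℕ) (j : ℕ) := by
  have hi : (i : ℕ) < 2 * n := i.isLt
  have hj : (j : ℕ) < 2 * n := j.isLt
  rw [JSp, JA]
  by_cases h1 : (j : ℕ) = (i : ℕ) + 1 ∧ (i : ℕ) % 2 = 0
  · have hn : (i : ℕ) / 2 < n := by omega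
    rw [Finset.sum_eq_single ⟨(i : ℕ) / 2, hn⟩ (fun k _ hk => ?_) (by simp)]
    · have hc1 : (i : ℕ) = 2 * ((⟨(i : ℕ) / 2, hn⟩ : Fin n) : ℕ) ∧
          (j : ℕ) = 2 * ((⟨(i : ℕ) / 2, hn⟩ : Fin n) : ℕ) + 1 := by
        simp only [Fin.val_mk]; omega
      rw [if_pos hc1, if_neg (by simp only [Fin.val_mk]; omega)]
      rw [if_pos h1, if_neg (by omega)]
      simp [Af, hn]
    · have hk' : (k : ℕ) ≠ (i : ℕ) / 2 := fun h => hk (Fin.ext h)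
      rw [if_neg (by omega), if_neg (by omega)]
      ring
  · by_cases h2 : (i : ℕ) = (j : ℕ) + 1 ∧ (j : ℕ) % 2 = 0
    · have hn : (j : ℕ) / 2 < n := by omega
      rw [Finset.sum_eq_single ⟨(j : ℕ) / 2, hn⟩ (fun k _ hk => ?_) (by simp)]
      · rw [if_neg (by simp only [Fin.val_mk]; omega),
          if_pos (by simp only [Fin.val_mk]; constructor <;> omega)]
        rw [if_neg h1, if_pos h2]
        simp [Af, hn]
        ring
      · have hk' : (k : ℕ) ≠ (j : ℕ) / 2 := fun h => hk (Fin.ext h)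
        rw [if_neg (by omega), if_neg (by omega)]
        ring
    · rw [if_neg h1, if_neg h2, add_zero]
      apply Finset.sum_eq_zero
      intro k _
      rw [if_neg (by omega), if_neg (by omega)]
      ring

end Stmt2Aux

open Stmt2Aux in
/-- in Case (Sp) the matrix `J(a)` satisfies the reflection equation
`R⁺₁₂ J₂ (R⁺₁₂)^{t₂} J₁ = J₁ (R⁺₁₂)^{t₂} J₂ R⁺₁₂` on `V ⊗ V`, `V = K^{2n}`. -/
theorem stmt_2 (n : ℕ) (a : Fin n → K1) (ha : ∀ k, a k ≠ 0) :
    Rplus (2 * n) * ((1 : Matrix (Fin (2 * n)) (Fin (2 * n)) K1) ⊗ₖ JSp n a) *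
        t2 (Rplus (2 * n)) * (JSp n a ⊗ₖ (1 : Matrix (Fin (2 * n)) (Fin (2 * n)) K1)) =
      (JSp n a ⊗ₖ (1 : Matrix (Fin (2 * n)) (Fin (2 * n)) K1)) * t2 (Rplus (2 * n)) *
        ((1 : Matrix (Fin (2 * n)) (Fin (2 * n)) K1) ⊗ₖ JSp n a) * Rplus (2 * n) := by
  rw [t2Rplus_eq, Rplus_eq]
  ext ⟨i, j⟩ ⟨m, p⟩
  rw [lhs_entry (JSp n a) i j m p, rhs_entry (JSp n a) i j m p]
  simp only [J_apply, Fin.lt_def]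
  exact key_nat (Af n a) i j m p

end
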